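/- Suppose the monogamy parameters satisfy the uniform boundedness condition with constant C. If (S^F_t, S^M_t, S^FM_t)_{t∈[0,T]} is a weakly continuous solution of the weak monogamy limit system, then the total population size X_t := S^F_t(A) + S^M_t(A) + 2·S^FM_t(A×A) satisfies X_t ≤ X_0 · e^{3Ct} for every t ∈ [0,T]. -/

import Mathlib

open MeasureTheory Set

namespace Monogamy5

/-- The age space `A = [0, ω]`. -/
abbrev A (ω : ℝ) : Type := Icc (0:ℝ) ω

/-- The age `0` as an element of `[0, ω]`. -/
def ageZero {ω : ℝ} (hω : 0 ≤ ω) : A ω := ⟨0, Set.left_mem_Icc.mpr hω⟩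

/-- A population composition: finite Borel measures describing single females, single
males, and couples (first coordinate: female's age; second coordinate: male's age). -/
structure Comp (ω : ℝ) where
  F : Measure (A ω)
  M : Measure (A ω)
  FM : Measure (A ω × A ω)
  finF : IsFiniteMeasure F
  finM : IsFiniteMeasure M
  finFM : IsFiniteMeasure FM

/-- The monogamy demographic parameters, as functions of the population composition. -/
structure Params (ω : ℝ) where
  /-- death rate of a married female -/
  hF : Comp ω → A ω × A ω → ℝ
  /-- death rate of a married male -/
  hM : Comp ω → A ω × A ω → ℝ
  /-- death rate of a single female -/
  gF : Comp ω → A ω → ℝ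
  /-- death rate of a single male -/
  gM : Comp ω → A ω → ℝ
  /-- couple separation rate -/
  hFM : Comp ω → A ω × A ω → ℝ
  /-- mean birth intensity of daughters from a couple -/
  bF : Comp ω → A ω × A ω → ℝ
  /-- mean birth intensity of sons from a couple -/
  bM : Comp ω → A ω × A ω → ℝ
  /-- mean birth intensity of daughters from a single female -/
  sF : Comp ω → A ω → ℝ
  /-- mean birth intensity of sons from a single female -/
  sM : Comp ω → A ω → ℝ
  /-- marriage rate -/
  rho : Comp ω → A ω × A ω → ℝ

/-- All parameters are measurable in the age variables. -/
def Params.Meas {ω : ℝ} (p : Params ω) : Prop :=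
  ∀ S : Comp ω, Measurable (p.hF S) ∧ Measurable (p.hM S) ∧ Measurable (p.gF S) ∧
    Measurable (p.gM S) ∧ Measurable (p.hFM S) ∧ Measurable (p.bF S) ∧
    Measurable (p.bM S) ∧ Measurable (p.sF S) ∧ Measurable (p.sM S) ∧
    Measurable (p.rho S)

/-- Uniform boundedness condition: all parameters take values in `[0, C]`. -/
def Params.Bounded {ω : ℝ} (p : Params ω) (C : ℝ) : Prop :=
  ∀ S : Comp ω,
    (∀ s, p.hF S s ∈ Icc (0:ℝ) C) ∧ (∀ s, p.hM S s ∈ Icc (0:ℝ) C) ∧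
    (∀ v, p.gF S v ∈ Icc (0:ℝ) C) ∧ (∀ v, p.gM S v ∈ Icc (0:ℝ) C) ∧
    (∀ s, p.hFM S s ∈ Icc (0:ℝ) C) ∧ (∀ s, p.bF S s ∈ Icc (0:ℝ) C) ∧
    (∀ s, p.bM S s ∈ Icc (0:ℝ) C) ∧ (∀ v, p.sF S v ∈ Icc (0:ℝ) C) ∧
    (∀ v, p.sM S v ∈ Icc (0:ℝ) C) ∧ (∀ s, p.rho S s ∈ Icc (0:ℝ) C)

/-- `f'` is the derivative of `f : A → ℝ` (within `[0, ω]`). -/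
def IsDeriv1 {ω : ℝ} (hω : 0 ≤ ω) (f f' : A ω → ℝ) : Prop :=
  ∀ v : A ω, HasDerivWithinAt (fun x : ℝ => f (projIcc 0 ω hω x)) (f' v) (Icc 0 ω) (v : ℝ)

/-- `gv` is the partial derivative of `g : A × A → ℝ` in the first variable. -/
def IsPartialV {ω : ℝ} (hω : 0 ≤ ω) (g gv : A ω × A ω → ℝ) : Prop :=
  ∀ v w : A ω,
    HasDerivWithinAt (fun x : ℝ => g (projIcc 0 ω hω x, w)) (gv (v, w)) (Icc 0 ω) (v : ℝ)

/-- `gw` is the partial derivative of `g : A × A → ℝ` in the second variable. -/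
def IsPartialW {ω : ℝ} (hω : 0 ≤ ω) (g gw : A ω × A ω → ℝ) : Prop :=
  ∀ v w : A ω,
    HasDerivWithinAt (fun x : ℝ => g (v, projIcc 0 ω hω x)) (gw (v, w)) (Icc 0 ω) (w : ℝ)

/-- The single-female drift term of the weak monogamy limit system. -/
noncomputable def IF {ω : ℝ} (hω : 0 ≤ ω) (p : Params ω) (S : Comp ω)
    (f f' : A ω → ℝ) : ℝ :=
  (∫ v, (f' v - p.gF S v * f v) ∂S.F) +
  (∫ q, (p.hM S q + p.hFM S q) * f q.1 ∂S.FM) +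
  f (ageZero hω) * ((∫ q, p.bF S q ∂S.FM) + ∫ v, p.sF S v ∂S.F) -
  ∫ v, (∫ w, f v * p.rho S (v, w) ∂S.M) ∂S.F

/-- The single-male drift term of the weak monogamy limit system. -/
noncomputable def IM {ω : ℝ} (hω : 0 ≤ ω) (p : Params ω) (S : Comp ω)
    (f f' : A ω → ℝ) : ℝ :=
  (∫ w, (f' w - p.gM S w * f w) ∂S.M) +
  (∫ q, (p.hF S q + p.hFM S q) * f q.2 ∂S.FM) +
  f (ageZero hω) * ((∫ q, p.bM S q ∂S.FM) + ∫ v, p.sM S v ∂S.F) -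
  ∫ v, (∫ w, f w * p.rho S (v, w) ∂S.M) ∂S.F

/-- The couple drift term of the weak monogamy limit system. -/
noncomputable def IFM {ω : ℝ} (p : Params ω) (S : Comp ω)
    (g gv gw : A ω × A ω → ℝ) : ℝ :=
  (∫ q, (gv q + gw q - (p.hF S q + p.hM S q + p.hFM S q) * g q) ∂S.FM) +
  ∫ v, (∫ w, g (v, w) * p.rho S (v, w) ∂S.M) ∂S.F

/-- `(S_t)_{t∈[0,T]}` satisfies the weak monogamy limit system. -/
def WeakSystem {ω : ℝ} (hω : 0 ≤ ω) (T : ℝ) (p : Params ω) (S : ℝ → Comp ω) : Prop :=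
  (∀ f f' : A ω → ℝ, Continuous f → Continuous f' → IsDeriv1 hω f f' →
    ∀ t ∈ Icc (0:ℝ) T,
      IntervalIntegrable (fun u => IF hω p (S u) f f') volume 0 t ∧
      (∫ v, f v ∂(S t).F) = (∫ v, f v ∂(S 0).F) +
        ∫ u in (0:ℝ)..t, IF hω p (S u) f f') ∧
  (∀ f f' : A ω → ℝ, Continuous f → Continuous f' → IsDeriv1 hω f f' →
    ∀ t ∈ Icc (0:ℝ) T,
      IntervalIntegrable (fun u => IM hω p (S u) f f') volume 0 t ∧
      (∫ w, f w ∂(S t).M) = (∫ w, f w ∂(S 0).M) +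
        ∫ u in (0:ℝ)..t, IM hω p (S u) f f') ∧
  (∀ g gv gw : A ω × A ω → ℝ, Continuous g → Continuous gv → Continuous gw →
    IsPartialV hω g gv → IsPartialW hω g gw →
    ∀ t ∈ Icc (0:ℝ) T,
      IntervalIntegrable (fun u => IFM p (S u) g gv gw) volume 0 t ∧
      (∫ q, g q ∂(S t).FM) = (∫ q, g q ∂(S 0).FM) +
        ∫ u in (0:ℝ)..t, IFM p (S u) g gv gw)

/-- `(S_t)_{t∈[0,T]}` is weakly continuous. -/
def WeaklyContinuous {ω : ℝ} (T : ℝ) (S : ℝ → Comp ω) : Prop :=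
  (∀ f : A ω → ℝ, Continuous f →
    ContinuousOn (fun t => ∫ v, f v ∂(S t).F) (Icc 0 T)) ∧
  (∀ f : A ω → ℝ, Continuous f →
    ContinuousOn (fun t => ∫ w, f w ∂(S t).M) (Icc 0 T)) ∧
  (∀ ψ : A ω × A ω → ℝ, Continuous ψ →
    ContinuousOn (fun t => ∫ q, ψ q ∂(S t).FM) (Icc 0 T))

open Topology

-- AUX

lemma integrable_of_bdd {α : Type*} [MeasurableSpace α] (μ : Measure α) [IsFiniteMeasure μ]
    {f : α → ℝ} (hf : Measurable f) {C : ℝ} (hb : ∀ x, f x ∈ Icc (0:ℝ) C) :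
    Integrable f μ := by
  refine (integrable_const C).mono' hf.aestronglyMeasurable (ae_of_all _ fun x => ?_)
  rw [Real.norm_eq_abs, abs_of_nonneg (hb x).1]
  exact (hb x).2

lemma integral_le_bdd {α : Type*} [MeasurableSpace α] (μ : Measure α) [IsFiniteMeasure μ]
    {f : α → ℝ} (hf : Measurable f) {C : ℝ} (hb : ∀ x, f x ∈ Icc (0:ℝ) C) :
    ∫ x, f x ∂μ ≤ C * (μ univ).toReal := by
  calc ∫ x, f x ∂μ ≤ ∫ _, C ∂μ :=
        integral_mono (integrable_of_bdd μ hf hb) (integrable_const C) fun x => (hb x).2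
    _ = C * (μ univ).toReal := by rw [integral_const, smul_eq_mul, mul_comm]; rfl

lemma drift_bound {ω : ℝ} (hω : 0 ≤ ω) (p : Params ω) (hpmeas : p.Meas)
    {C : ℝ} (hC : 0 ≤ C) (hbdd : p.Bounded C) (S : Comp ω) :
    IF hω p S (fun _ => 1) (fun _ => 0) + IM hω p S (fun _ => 1) (fun _ => 0) +
      2 * IFM p S (fun _ => 1) (fun _ => 0) (fun _ => 0) ≤
    3 * C * ((S.F univ).toReal + (S.M univ).toReal + 2 * (S.FM univ).toReal) := by
  haveI := S.finF; haveI := S.finM; haveI := S.finFM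
  obtain ⟨mhF, mhM, mgF, mgM, mhFM, mbF, mbM, msF, msM, mrho⟩ := hpmeas S
  obtain ⟨bhF, bhM, bgF, bgM, bhFM, bbF, bbM, bsF, bsM, brho⟩ := hbdd S
  have ihF := integrable_of_bdd S.FM mhF bhF
  have ihM := integrable_of_bdd S.FM mhM bhM
  have ihFM := integrable_of_bdd S.FM mhFM bhFM
  have e3 : (∫ q, (p.hM S q + p.hFM S q) ∂S.FM)
      = (∫ q, p.hM S q ∂S.FM) + ∫ q, p.hFM S q ∂S.FM := integral_add ihM ihFM
  have e4 : (∫ q, (p.hF S q + p.hFM S q) ∂S.FM)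
      = (∫ q, p.hF S q ∂S.FM) + ∫ q, p.hFM S q ∂S.FM := integral_add ihF ihFM
  have esum : (∫ q, (p.hF S q + p.hM S q + p.hFM S q) ∂S.FM)
      = (∫ q, p.hF S q ∂S.FM) + (∫ q, p.hM S q ∂S.FM) + ∫ q, p.hFM S q ∂S.FM := by
    simpa [integral_add ihF ihM] using integral_add (ihF.add ihM) ihFM
  have hbF := integral_le_bdd S.FM mbF bbF
  have hbM := integral_le_bdd S.FM mbM bbM
  have hsF := integral_le_bdd S.F msF bsF
  have hsM := integral_le_bdd S.F msM bsM
  have hgF : 0 ≤ ∫ v, p.gF S v ∂S.F := integral_nonneg fun v => (bgF v).1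
  have hgM : 0 ≤ ∫ w, p.gM S w ∂S.M := integral_nonneg fun w => (bgM w).1
  have hhF : 0 ≤ ∫ q, p.hF S q ∂S.FM := integral_nonneg fun q => (bhF q).1
  have hhM : 0 ≤ ∫ q, p.hM S q ∂S.FM := integral_nonneg fun q => (bhM q).1
  have tF : 0 ≤ (S.F univ).toReal := ENNReal.toReal_nonneg
  have tM : 0 ≤ (S.M univ).toReal := ENNReal.toReal_nonneg
  have tFM : 0 ≤ (S.FM univ).toReal := ENNReal.toReal_nonneg
  have cF : 0 ≤ C * (S.F univ).toReal := mul_nonneg hC tF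
  have cM : 0 ≤ C * (S.M univ).toReal := mul_nonneg hC tM
  have cFM : 0 ≤ C * (S.FM univ).toReal := mul_nonneg hC tFM
  simp only [IF, IM, IFM, mul_one, one_mul, zero_sub, zero_add, integral_neg]
  rw [e3, e4, esum]
  linarith

/-- Under the uniform boundedness condition with constant `C`, any weakly
continuous solution of the weak monogamy limit system satisfies: the total population size
`X_t = S^F_t(A) + S^M_t(A) + 2 S^{FM}_t(A×A)` is bounded by `X_0 · e^{3Ct}` on `[0,T]`. -/
theorem monogamy_total_population_bound
    (T ω : ℝ) (hT : 0 < T) (hω : 0 < ω)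
    (p : Params ω) (hpmeas : p.Meas)
    (C : ℝ) (hC : 0 ≤ C) (hbdd : p.Bounded C)
    (S : ℝ → Comp ω)
    (hScont : WeaklyContinuous T S)
    (hSweak : WeakSystem hω.le T p S) :
    ∀ t ∈ Icc (0:ℝ) T,
      ((S t).F univ).toReal + ((S t).M univ).toReal + 2 * ((S t).FM univ).toReal ≤
        (((S 0).F univ).toReal + ((S 0).M univ).toReal + 2 * ((S 0).FM univ).toReal) *
          Real.exp (3 * C * t) := by
  have hder : IsDeriv1 hω.le (fun _ => (1:ℝ)) (fun _ => (0:ℝ)) := by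
    intro v; exact hasDerivWithinAt_const _ _ _
  have hpv : IsPartialV hω.le (fun _ => (1:ℝ)) (fun _ => (0:ℝ)) := by
    intro v w; exact hasDerivWithinAt_const _ _ _
  have hpw : IsPartialW hω.le (fun _ => (1:ℝ)) (fun _ => (0:ℝ)) := by
    intro v w; exact hasDerivWithinAt_const _ _ _
  obtain ⟨hFsys, hMsys, hFMsys⟩ := hSweak
  have HF := hFsys (fun _ => 1) (fun _ => 0) continuous_const continuous_const hder
  have HM := hMsys (fun _ => 1) (fun _ => 0) continuous_const continuous_const hder
  have HFM := hFMsys (fun _ => 1) (fun _ => 0) (fun _ => 0) continuous_const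
    continuous_const continuous_const hpv hpw
  set X : ℝ → ℝ := fun u =>
    ((S u).F univ).toReal + ((S u).M univ).toReal + 2 * ((S u).FM univ).toReal with hX
  set D : ℝ → ℝ := fun u =>
    IF hω.le p (S u) (fun _ => 1) (fun _ => 0) + IM hω.le p (S u) (fun _ => 1) (fun _ => 0) +
      2 * IFM p (S u) (fun _ => 1) (fun _ => 0) (fun _ => 0) with hD
  have hXnn : ∀ s, 0 ≤ X s := by
    intro s
    have h1 : (0:ℝ) ≤ (((S s).F univ).toReal) := ENNReal.toReal_nonneg
    have h2 : (0:ℝ) ≤ (((S s).M univ).toReal) := ENNReal.toReal_nonneg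
    have h3 : (0:ℝ) ≤ (((S s).FM univ).toReal) := ENNReal.toReal_nonneg
    simp only [hX]; linarith
  have hDint : ∀ s ∈ Icc (0:ℝ) T, IntervalIntegrable D volume 0 s := by
    intro s hs
    exact ((HF s hs).1.add (HM s hs).1).add ((HFM s hs).1.const_mul 2)
  have hXeq : ∀ s ∈ Icc (0:ℝ) T, X s = X 0 + ∫ u in (0:ℝ)..s, D u := by
    intro s hs
    haveI := (S s).finF; haveI := (S s).finM; haveI := (S s).finFM
    haveI := (S 0).finF; haveI := (S 0).finM; haveI := (S 0).finFM
    have h1 := (HF s hs).2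
    have h2 := (HM s hs).2
    have h3 := (HFM s hs).2
    simp only [integral_const, smul_eq_mul, mul_one, measureReal_def] at h1 h2 h3
    have hsplit : (∫ u in (0:ℝ)..s, D u) =
        (∫ u in (0:ℝ)..s, IF hω.le p (S u) (fun _ => 1) (fun _ => 0)) +
        (∫ u in (0:ℝ)..s, IM hω.le p (S u) (fun _ => 1) (fun _ => 0)) +
        2 * ∫ u in (0:ℝ)..s, IFM p (S u) (fun _ => 1) (fun _ => 0) (fun _ => 0) := by
      rw [hD]
      rw [intervalIntegral.integral_add ((HF s hs).1.add (HM s hs).1)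
        ((HFM s hs).1.const_mul 2),
        intervalIntegral.integral_add (HF s hs).1 (HM s hs).1,
        intervalIntegral.integral_const_mul]
    simp only [hX]
    rw [hsplit]
    linarith
  have hXcont : ContinuousOn X (Icc 0 T) := by
    have c1 := hScont.1 (fun _ => (1:ℝ)) continuous_const
    have c2 := hScont.2.1 (fun _ => (1:ℝ)) continuous_const
    have c3 := hScont.2.2 (fun _ => (1:ℝ)) continuous_const
    have : X = fun t => (∫ _v, (1:ℝ) ∂(S t).F) + (∫ _w, (1:ℝ) ∂(S t).M) +
        2 * ∫ _q, (1:ℝ) ∂(S t).FM := by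
      funext t
      haveI := (S t).finF; haveI := (S t).finM; haveI := (S t).finFM
      simp [hX, integral_const, measureReal_def]
    rw [this]
    exact (c1.add c2).add (continuousOn_const.mul c3)
  have hD_le : ∀ u, D u ≤ 3 * C * X u := fun u =>
    drift_bound hω.le p hpmeas hC hbdd (S u)
  set K : ℝ := 3 * C with hK
  have hKnn : 0 ≤ K := by positivity
  have hKXcont : ContinuousOn (fun u => K * X u) (Icc 0 T) := continuousOn_const.mul hXcont
  have hXK_int : ∀ s ∈ Icc (0:ℝ) T, IntervalIntegrable (fun u => K * X u) volume 0 s := by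
    intro s hs
    apply ContinuousOn.intervalIntegrable
    refine hKXcont.mono ?_
    rw [uIcc_of_le hs.1]
    exact Icc_subset_Icc le_rfl hs.2
  set g : ℝ → ℝ := fun s => X 0 + ∫ u in (0:ℝ)..s, K * X u with hg
  have hXle_g : ∀ s ∈ Icc (0:ℝ) T, X s ≤ g s := by
    intro s hs
    rw [hXeq s hs]
    exact add_le_add (le_refl _) (intervalIntegral.integral_mono_on hs.1 (hDint s hs)
      (hXK_int s hs) (fun u _ => hD_le u))
  have hg0 : g 0 = X 0 := by simp [hg]
  have hgnn : ∀ s ∈ Icc (0:ℝ) T, 0 ≤ g s := fun s hs => (hXnn s).trans (hXle_g s hs)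
  have hgcont : ContinuousOn g (Icc 0 T) := by
    apply continuousOn_const.add
    have hio : IntegrableOn (fun u => K * X u) (uIcc 0 T) volume := by
      rw [uIcc_of_le hT.le]; exact hKXcont.integrableOn_Icc
    have h := intervalIntegral.continuousOn_primitive_interval hio
    rwa [uIcc_of_le hT.le] at h
  have hgderiv : ∀ s ∈ Ico (0:ℝ) T, HasDerivWithinAt g (K * X s) (Ici s) s := by
    intro s hs
    have hint : IntervalIntegrable (fun u => K * X u) volume 0 s := hXK_int s ⟨hs.1, hs.2.le⟩
    have hmeas : StronglyMeasurableAtFilter (fun u => K * X u) (nhdsWithin s (Ioi s)) := by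
      refine ⟨Ioo s T, Ioo_mem_nhdsGT hs.2, ?_⟩
      refine (hKXcont.mono ?_).aestronglyMeasurable measurableSet_Ioo
      exact fun x hx => ⟨hs.1.trans hx.1.le, hx.2.le⟩
    have hcw : ContinuousWithinAt (fun u => K * X u) (Ioi s) s := by
      have h := hKXcont s ⟨hs.1, hs.2.le⟩
      exact h.mono_of_mem_nhdsWithin (Icc_mem_nhdsGT_of_mem hs)
    exact (intervalIntegral.integral_hasDerivWithinAt_right hint hmeas hcw).const_add (X 0)
  have hbound : ∀ s ∈ Ico (0:ℝ) T, ‖K * X s‖ ≤ K * ‖g s‖ + 0 := by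
    intro s hs
    rw [add_zero, Real.norm_eq_abs, Real.norm_eq_abs,
      abs_of_nonneg (mul_nonneg hKnn (hXnn s)), abs_of_nonneg (hgnn s ⟨hs.1, hs.2.le⟩)]
    exact mul_le_mul_of_nonneg_left (hXle_g s ⟨hs.1, hs.2.le⟩) hKnn
  have ha : ‖g 0‖ ≤ X 0 := by
    rw [hg0, Real.norm_eq_abs, abs_of_nonneg (hXnn 0)]
  have hgron := norm_le_gronwallBound_of_norm_deriv_right_le hgcont hgderiv ha hbound
  intro t ht
  have h1 := hgron t ht
  rw [sub_zero, gronwallBound_ε0] at h1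
  have h2 : X t ≤ X 0 * Real.exp (K * t) := by
    refine (hXle_g t ht).trans ?_
    calc g t ≤ ‖g t‖ := le_abs_self _
      _ ≤ X 0 * Real.exp (K * t) := h1
  simpa [hX, hK] using h2

end Monogamy5
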